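/- For every ã ≥ −k/σ, one has (ã + k/σ)² ρ*(ã) ≤ (a* + k/σ)² ρ(a*); that is, a* is a global maximizer of θ ↦ (θ + k/σ)² ρ*(θ) on [−k/σ, ∞), and the maximal value equals (a* + k/σ)² ρ(a*) since ρ*(a*) = ρ(a*). -/

import Mathlib

open Real MeasureTheory

/-- The standard normal density. -/
noncomputable def gaussPdf (x : ℝ) : ℝ :=
  (Real.sqrt (2 * Real.pi))⁻¹ * Real.exp (-(x ^ 2) / 2)

/-- ρ(a) = ∫ (1/(exp(2ay)+1))² φ(y−a) dy. -/
noncomputable def ρ (a : ℝ) : ℝ :=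
  ∫ y : ℝ, (1 / (Real.exp (2 * a * y) + 1)) ^ 2 * gaussPdf (y - a)

/-- ρ*(θ) = ∫ (1/(exp(2a*y)+1))² φ(y−θ) dy, the logistic weight frozen at a*. -/
noncomputable def ρstar (astar θ : ℝ) : ℝ :=
  ∫ y : ℝ, (1 / (Real.exp (2 * astar * y) + 1)) ^ 2 * gaussPdf (y - θ)

/-!
For `a ≥ 0`, `θ ↦ ρstar a θ` is the Gaussian smoothing of the log-concave weight
`y ↦ (1 + exp (2 a y))⁻²`, hence is itself log-concave: Stein's identity turns its first two
derivatives into Gaussian moments, and Chebyshev's integral inequality compares them. Therefore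
`2 / (θ + c) + ∂_θ ρstar / ρstar` is strictly decreasing on `(-c, ∞)`, so a critical point of
`(θ + c)² ρstar a θ` there is its maximum on `[-c, ∞)`.

It remains to see that `a*` is such a critical point. By a symmetry of the logistic–Gaussian
pair, `∂_a ρstar a θ` vanishes at `a = θ`, so `ρ' t = ∂_θ ρstar t t`. Maximality of `τ*` gives
`τ* ρ'(τ*) = -2 ρ(τ*)`, which makes the derivative of `(t + c)² ρ t` negative at `τ*`; it is
positive at `0`, so its maximiser `a*` on `[0, τ*]` is interior, hence critical.
-/

open Filter Topology Set

theorem Monovary.integral_mul_integral_le {α : Type*} [MeasurableSpace α] {μ : Measure α}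
    [SFinite μ] {f g ψ : α → ℝ} (hfg : Monovary f g) (hψ : 0 ≤ ψ) (hψi : Integrable ψ μ)
    (hf : Integrable (fun x => f x * ψ x) μ) (hg : Integrable (fun x => g x * ψ x) μ)
    (hfg' : Integrable (fun x => f x * g x * ψ x) μ) :
    (∫ x, f x * ψ x ∂μ) * (∫ x, g x * ψ x ∂μ) ≤ (∫ x, f x * g x * ψ x ∂μ) * ∫ x, ψ x ∂μ := by
  have hprod : 0 ≤ ∫ p : α × α, (f p.2 - f p.1) * (g p.2 - g p.1) * (ψ p.1 * ψ p.2) ∂μ.prod μ :=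
    integral_nonneg fun p => mul_nonneg (hfg.sub_mul_sub_nonneg p.1 p.2) (mul_nonneg (hψ _) (hψ _))
  have hexp : (fun p : α × α => (f p.2 - f p.1) * (g p.2 - g p.1) * (ψ p.1 * ψ p.2)) =
      fun p => (ψ p.1 * (f p.2 * g p.2 * ψ p.2) + f p.1 * g p.1 * ψ p.1 * ψ p.2)
        - (f p.1 * ψ p.1 * (g p.2 * ψ p.2) + g p.1 * ψ p.1 * (f p.2 * ψ p.2)) := by
    ext p; ring
  rw [hexp, integral_sub ((hψi.mul_prod hfg').fun_add (hfg'.mul_prod hψi))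
      ((hf.mul_prod hg).fun_add (hg.mul_prod hf)),
    integral_add (hψi.mul_prod hfg') (hfg'.mul_prod hψi),
    integral_add (hf.mul_prod hg) (hg.mul_prod hf),
    integral_prod_mul (μ := μ) (ν := μ) ψ (fun x => f x * g x * ψ x),
    integral_prod_mul (μ := μ) (ν := μ) (fun x => f x * g x * ψ x) ψ,
    integral_prod_mul (μ := μ) (ν := μ) (fun x => f x * ψ x) (fun x => g x * ψ x),
    integral_prod_mul (μ := μ) (ν := μ) (fun x => g x * ψ x) (fun x => f x * ψ x)] at hprod
  linarith

lemma gaussPdf_eq_gaussianPDFReal : gaussPdf = ProbabilityTheory.gaussianPDFReal 0 1 := by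
  ext x; simp [gaussPdf, ProbabilityTheory.gaussianPDFReal]

lemma gaussPdf_pos (x : ℝ) : 0 < gaussPdf x := by
  rw [gaussPdf_eq_gaussianPDFReal]
  exact ProbabilityTheory.gaussianPDFReal_pos _ _ _ one_ne_zero

lemma integrable_gaussPdf : Integrable gaussPdf := by
  rw [gaussPdf_eq_gaussianPDFReal]; exact ProbabilityTheory.integrable_gaussianPDFReal _ _

@[fun_prop] lemma continuous_gaussPdf : Continuous gaussPdf := by
  unfold gaussPdf; fun_prop

lemma integrable_id_mul_gaussPdf : Integrable fun x => x * gaussPdf x := by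
  simpa [gaussPdf, mul_left_comm, neg_div, div_eq_inv_mul] using
    (integrable_mul_exp_neg_mul_sq (b := 2⁻¹) (by norm_num)).const_mul (√(2 * π))⁻¹

lemma hasDerivAt_gaussPdf (x : ℝ) : HasDerivAt gaussPdf (-x * gaussPdf x) x := by
  have h : HasDerivAt (fun x : ℝ => -(x ^ 2) / 2) (-x) x :=
    (((hasDerivAt_pow 2 x).neg).div_const 2).congr_deriv (by norm_num; ring)
  exact ((h.exp).const_mul (√(2 * π))⁻¹).congr_deriv (by rw [gaussPdf]; ring)

lemma tendsto_gaussPdf_cocompact : Tendsto gaussPdf (cocompact ℝ) (𝓝 0) := by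
  have h : Tendsto (fun x : ℝ => -(x ^ 2) / 2) (cocompact ℝ) atBot := by
    have hsq : Tendsto (fun x : ℝ => ‖x‖ ^ 2 / 2) (cocompact ℝ) atTop :=
      ((tendsto_pow_atTop two_ne_zero).comp tendsto_norm_cocompact_atTop).atTop_div_const two_pos
    refine (tendsto_neg_atTop_atBot.comp hsq).congr fun x => ?_
    simp [neg_div]
  have := (tendsto_exp_atBot.comp h).const_mul (√(2 * π))⁻¹
  rwa [mul_zero] at this

lemma gaussPdf_neg_sub (y t : ℝ) : gaussPdf (-y - t) = exp (-(2 * t * y)) * gaussPdf (y - t) := by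
  rw [gaussPdf, gaussPdf, mul_left_comm, ← exp_add]
  congr 2
  ring

noncomputable def gaussSmooth (h : ℝ → ℝ) (θ : ℝ) : ℝ := ∫ z, h (z + θ) * gaussPdf z

section GaussSmooth

variable {h h' h'' : ℝ → ℝ} {C C' C'' : ℝ}

lemma measurable_of_hasDerivAt (hh : ∀ x, HasDerivAt h (h' x) x) : Measurable h :=
  (continuous_iff_continuousAt.2 fun x => (hh x).continuousAt).measurable

lemma measurable_derivative_of_hasDerivAt (hh : ∀ x, HasDerivAt h (h' x) x) : Measurable h' := by
  rw [show h' = deriv h from funext fun x => (hh x).deriv.symm]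
  exact measurable_deriv h

lemma integrable_comp_add_mul_gaussPdf (hm : Measurable h) (hb : ∀ x, |h x| ≤ C) (θ : ℝ) :
    Integrable fun z => h (z + θ) * gaussPdf z :=
  integrable_gaussPdf.bdd_mul (hm.comp (measurable_add_const θ)).aestronglyMeasurable
    (Eventually.of_forall fun _ => (Real.norm_eq_abs _).trans_le (hb _))

lemma integrable_id_mul_comp_add_mul_gaussPdf (hm : Measurable h) (hb : ∀ x, |h x| ≤ C)
    (θ : ℝ) : Integrable fun z => z * h (z + θ) * gaussPdf z :=
  (integrable_id_mul_gaussPdf.bdd_mul (hm.comp (measurable_add_const θ)).aestronglyMeasurable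
    (Eventually.of_forall fun _ => (Real.norm_eq_abs _).trans_le (hb _))).congr
    (Eventually.of_forall fun z => by simp only [Function.comp_apply]; ring)

/-- Stein's identity. -/
theorem integral_deriv_mul_gaussPdf (hh : ∀ x, HasDerivAt h (h' x) x) (hb : ∀ x, |h x| ≤ C)
    (hb' : ∀ x, |h' x| ≤ C') : ∫ x, h' x * gaussPdf x = ∫ x, x * h x * gaussPdf x := by
  have hd (x : ℝ) : HasDerivAt (fun x => h x * gaussPdf x)
      (h' x * gaussPdf x - x * h x * gaussPdf x) x :=
    ((hh x).mul (hasDerivAt_gaussPdf x)).congr_deriv (by ring)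
  have hlim : Tendsto (fun x => h x * gaussPdf x) (cocompact ℝ) (𝓝 0) :=
    isBoundedUnder_le_mul_tendsto_zero (isBoundedUnder_of ⟨C, fun x => by simpa using hb x⟩)
      tendsto_gaussPdf_cocompact
  have i₁ := integrable_comp_add_mul_gaussPdf (measurable_derivative_of_hasDerivAt hh) hb' 0
  have i₂ := integrable_id_mul_comp_add_mul_gaussPdf (measurable_of_hasDerivAt hh) hb 0
  simp only [add_zero] at i₁ i₂
  have := integral_of_hasDerivAt_of_tendsto hd (i₁.sub i₂) (hlim.mono_left atBot_le_cocompact)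
    (hlim.mono_left atTop_le_cocompact)
  rw [integral_sub i₁ i₂, sub_zero] at this
  linarith

lemma hasDerivAt_gaussSmooth (hh : ∀ x, HasDerivAt h (h' x) x) (hb : ∀ x, |h x| ≤ C)
    (hb' : ∀ x, |h' x| ≤ C') (θ : ℝ) : HasDerivAt (gaussSmooth h) (gaussSmooth h' θ) θ :=
  (hasDerivAt_integral_of_dominated_loc_of_deriv_le (bound := fun z => C' * gaussPdf z) univ_mem
    (Eventually.of_forall fun θ =>
      (integrable_comp_add_mul_gaussPdf (measurable_of_hasDerivAt hh) hb θ).aestronglyMeasurable)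
    (integrable_comp_add_mul_gaussPdf (measurable_of_hasDerivAt hh) hb θ)
    (integrable_comp_add_mul_gaussPdf (measurable_derivative_of_hasDerivAt hh) hb'
      θ).aestronglyMeasurable
    (Eventually.of_forall fun z x _ => by
      rw [norm_mul, Real.norm_of_nonneg (gaussPdf_pos z).le, Real.norm_eq_abs]
      exact mul_le_mul_of_nonneg_right (hb' _) (gaussPdf_pos z).le)
    (integrable_gaussPdf.const_mul C')
    (Eventually.of_forall fun z x _ => ((hh (z + x)).comp_const_add z x).mul_const _)).2

lemma gaussSmooth_eq_integral_id_mul (hh : ∀ x, HasDerivAt h (h' x) x) (hb : ∀ x, |h x| ≤ C)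
    (hb' : ∀ x, |h' x| ≤ C') (θ : ℝ) :
    gaussSmooth h' θ = ∫ z, z * h (z + θ) * gaussPdf z :=
  integral_deriv_mul_gaussPdf (fun z => (hh (z + θ)).comp_add_const z θ) (fun _ => hb _)
    (fun _ => hb' _)

lemma gaussSmooth_pos (hm : Measurable h) (hb : ∀ x, |h x| ≤ C) (hpos : ∀ x, 0 < h x) (θ : ℝ) :
    0 < gaussSmooth h θ := by
  have hψ (z : ℝ) : 0 < h (z + θ) * gaussPdf z := mul_pos (hpos _) (gaussPdf_pos z)
  rw [gaussSmooth, integral_pos_iff_support_of_nonneg (fun z => (hψ z).le)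
    (integrable_comp_add_mul_gaussPdf hm hb θ), Function.support_eq_univ fun z => (hψ z).ne']
  simp

/-- By Stein's identity the claim reads `(∫ r ψ) (∫ z ψ) ≤ (∫ r z ψ) (∫ ψ)` for the weight
`ψ z = h (z + θ) φ z` and the nondecreasing `r z = -h' (z + θ) / h (z + θ)`: this is Chebyshev's
integral inequality. -/
theorem gaussSmooth_mul_le_sq (hh : ∀ x, HasDerivAt h (h' x) x)
    (hh' : ∀ x, HasDerivAt h' (h'' x) x) (hb : ∀ x, |h x| ≤ C) (hb' : ∀ x, |h' x| ≤ C')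
    (hb'' : ∀ x, |h'' x| ≤ C'') (hpos : ∀ x, 0 < h x) (hanti : Antitone fun x => h' x / h x)
    (θ : ℝ) : gaussSmooth h'' θ * gaussSmooth h θ ≤ gaussSmooth h' θ ^ 2 := by
  set r := fun z => -(h' (z + θ) / h (z + θ))
  have hr : Monotone r := fun x y hxy => neg_le_neg (hanti (by linarith))
  have hrψ (z : ℝ) : r z * (h (z + θ) * gaussPdf z) = -(h' (z + θ) * gaussPdf z) := by
    simp only [r]; field_simp [(hpos (z + θ)).ne']
  have hrzψ (z : ℝ) : r z * z * (h (z + θ) * gaussPdf z) = -(z * h' (z + θ) * gaussPdf z) := by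
    simp only [r]; field_simp [(hpos (z + θ)).ne']
  have hm := measurable_of_hasDerivAt hh
  have hm' := measurable_derivative_of_hasDerivAt hh
  have cheb := (hr.monovary monotone_id).integral_mul_integral_le (μ := volume)
    (fun z => (mul_pos (hpos (z + θ)) (gaussPdf_pos z)).le)
    (integrable_comp_add_mul_gaussPdf hm hb θ)
    (by simpa only [hrψ] using (integrable_comp_add_mul_gaussPdf hm' hb' θ).fun_neg)
    (by simpa only [id, mul_assoc] using integrable_id_mul_comp_add_mul_gaussPdf hm hb θ)
    (by simpa only [id, hrzψ] using (integrable_id_mul_comp_add_mul_gaussPdf hm' hb' θ).fun_neg)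
  simp only [hrψ, hrzψ, id, integral_neg, ← mul_assoc] at cheb
  rw [gaussSmooth_eq_integral_id_mul hh' hb' hb'', sq]
  nth_rewrite 2 [gaussSmooth_eq_integral_id_mul hh hb hb']
  unfold gaussSmooth
  linarith

end GaussSmooth

noncomputable def logisticSq (x : ℝ) : ℝ := sigmoid (-x) ^ 2

noncomputable def logisticSqDeriv (x : ℝ) : ℝ := -2 * sigmoid x * sigmoid (-x) ^ 2

noncomputable def logisticSqDeriv2 (x : ℝ) : ℝ :=
  -2 * sigmoid x * sigmoid (-x) ^ 2 * (sigmoid (-x) - 2 * sigmoid x)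

lemma one_div_exp_add_one (x : ℝ) : 1 / (exp x + 1) = sigmoid (-x) := by
  rw [sigmoid_def, neg_neg, one_div, add_comm]

lemma hasDerivAt_sigmoid_neg (x : ℝ) :
    HasDerivAt (fun x => sigmoid (-x)) (-(sigmoid x * sigmoid (-x))) x :=
  ((hasDerivAt_sigmoid (-x)).comp x (hasDerivAt_neg x)).congr_deriv
    (by rw [sigmoid_neg x]; ring)

lemma hasDerivAt_logisticSq (x : ℝ) : HasDerivAt logisticSq (logisticSqDeriv x) x :=
  ((hasDerivAt_sigmoid_neg x).pow 2).congr_deriv (by rw [logisticSqDeriv]; ring)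

lemma hasDerivAt_logisticSqDeriv (x : ℝ) : HasDerivAt logisticSqDeriv (logisticSqDeriv2 x) x :=
  (((hasDerivAt_sigmoid x).const_mul (-2)).mul ((hasDerivAt_sigmoid_neg x).fun_pow 2)).congr_deriv
    (by rw [logisticSqDeriv2, sigmoid_neg x]; ring)

@[fun_prop] lemma continuous_logisticSq : Continuous logisticSq :=
  continuous_iff_continuousAt.2 fun x => (hasDerivAt_logisticSq x).continuousAt

@[fun_prop] lemma continuous_logisticSqDeriv : Continuous logisticSqDeriv :=
  continuous_iff_continuousAt.2 fun x => (hasDerivAt_logisticSqDeriv x).continuousAt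

lemma logisticSq_pos (x : ℝ) : 0 < logisticSq x := pow_pos (sigmoid_pos _) 2

lemma abs_logisticSq_le (x : ℝ) : |logisticSq x| ≤ 1 := by
  have := sigmoid_lt_one (-x)
  rw [logisticSq, abs_of_nonneg (by positivity)]
  nlinarith [sigmoid_pos (-x)]

lemma abs_logisticSqDeriv_le (x : ℝ) : |logisticSqDeriv x| ≤ 2 := by
  have h₁ := sigmoid_pos x; have h₂ := sigmoid_pos (-x)
  have h₃ := sigmoid_lt_one x; have h₄ := sigmoid_lt_one (-x)
  rw [logisticSqDeriv, abs_le]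
  constructor <;> nlinarith [mul_pos h₁ h₂, mul_pos (mul_pos h₁ h₂) h₂]

lemma abs_logisticSqDeriv2_le (x : ℝ) : |logisticSqDeriv2 x| ≤ 4 := by
  have h₁ := sigmoid_pos x; have h₂ := sigmoid_pos (-x)
  have h₃ := sigmoid_lt_one x; have h₄ := sigmoid_lt_one (-x)
  have h₅ : sigmoid x * sigmoid (-x) ^ 2 ≤ 1 := by
    nlinarith [mul_pos h₁ h₂, mul_pos (mul_pos h₁ h₂) h₂]
  have h₆ : |sigmoid (-x) - 2 * sigmoid x| ≤ 2 := by rw [abs_le]; constructor <;> linarith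
  rw [logisticSqDeriv2, abs_mul, abs_mul, abs_mul,
    abs_of_pos (by positivity : (0 : ℝ) < sigmoid (-x) ^ 2), abs_of_pos h₁]
  norm_num
  nlinarith [abs_nonneg (sigmoid (-x) - 2 * sigmoid x), mul_pos h₁ (pow_pos h₂ 2)]

lemma logisticSqDeriv_div_logisticSq (x : ℝ) :
    logisticSqDeriv x / logisticSq x = -2 * sigmoid x := by
  rw [logisticSqDeriv, logisticSq]
  field_simp [(sigmoid_pos (-x)).ne']

lemma logisticSqDeriv_neg (x : ℝ) : logisticSqDeriv (-x) = exp x * logisticSqDeriv x := by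
  rw [logisticSqDeriv, logisticSqDeriv, neg_neg, ← sigmoid_mul_rexp_neg x, exp_neg]
  field_simp

noncomputable def ρstarDeriv (a θ : ℝ) : ℝ :=
  gaussSmooth (fun y => logisticSqDeriv (2 * a * y) * (2 * a)) θ

noncomputable def ρstarDeriv2 (a θ : ℝ) : ℝ :=
  gaussSmooth (fun y => logisticSqDeriv2 (2 * a * y) * (2 * a) * (2 * a)) θ

section RhoStar

variable (a : ℝ)

lemma ρstar_eq_gaussSmooth : ρstar a = gaussSmooth (fun y => logisticSq (2 * a * y)) := by
  ext θ
  rw [ρstar, gaussSmooth, ← integral_add_right_eq_self _ θ]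
  simp only [add_sub_cancel_right, one_div_exp_add_one, logisticSq]

lemma hasDerivAt_logisticSq_comp (y : ℝ) : HasDerivAt (fun y => logisticSq (2 * a * y))
    (logisticSqDeriv (2 * a * y) * (2 * a)) y :=
  (hasDerivAt_logisticSq _).comp y (by simpa using (hasDerivAt_id y).const_mul (2 * a))

lemma hasDerivAt_logisticSqDeriv_comp (y : ℝ) :
    HasDerivAt (fun y => logisticSqDeriv (2 * a * y) * (2 * a))
      (logisticSqDeriv2 (2 * a * y) * (2 * a) * (2 * a)) y :=
  ((hasDerivAt_logisticSqDeriv _).comp y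
    (by simpa using (hasDerivAt_id y).const_mul (2 * a))).mul_const _

lemma abs_logisticSqDeriv_comp_le (y : ℝ) :
    |logisticSqDeriv (2 * a * y) * (2 * a)| ≤ 2 * |2 * a| := by
  rw [abs_mul]
  gcongr
  exact abs_logisticSqDeriv_le _

lemma abs_logisticSqDeriv2_comp_le (y : ℝ) :
    |logisticSqDeriv2 (2 * a * y) * (2 * a) * (2 * a)| ≤ 4 * |2 * a| * |2 * a| := by
  rw [abs_mul, abs_mul]
  gcongr
  exact abs_logisticSqDeriv2_le _

lemma hasDerivAt_ρstar (θ : ℝ) : HasDerivAt (ρstar a) (ρstarDeriv a θ) θ := by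
  rw [ρstar_eq_gaussSmooth]
  exact hasDerivAt_gaussSmooth (hasDerivAt_logisticSq_comp a) (fun _ => abs_logisticSq_le _)
    (abs_logisticSqDeriv_comp_le a) θ

lemma hasDerivAt_ρstarDeriv (θ : ℝ) : HasDerivAt (ρstarDeriv a) (ρstarDeriv2 a θ) θ :=
  hasDerivAt_gaussSmooth (hasDerivAt_logisticSqDeriv_comp a) (abs_logisticSqDeriv_comp_le a)
    (abs_logisticSqDeriv2_comp_le a) θ

lemma ρstar_pos (θ : ℝ) : 0 < ρstar a θ := by
  rw [ρstar_eq_gaussSmooth]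
  exact gaussSmooth_pos (by fun_prop) (fun _ => abs_logisticSq_le _) (fun _ => logisticSq_pos _) θ

lemma ρstarDeriv_zero (θ : ℝ) : ρstarDeriv 0 θ = 0 := by
  simp [ρstarDeriv, gaussSmooth]

lemma ρstarDeriv2_mul_le_sq (ha : 0 ≤ a) (θ : ℝ) :
    ρstarDeriv2 a θ * ρstar a θ ≤ ρstarDeriv a θ ^ 2 := by
  rw [ρstar_eq_gaussSmooth]
  refine gaussSmooth_mul_le_sq (hasDerivAt_logisticSq_comp a) (hasDerivAt_logisticSqDeriv_comp a)
    (fun _ => abs_logisticSq_le _) (abs_logisticSqDeriv_comp_le a)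
    (abs_logisticSqDeriv2_comp_le a) (fun _ => logisticSq_pos _) (fun x y hxy => ?_) θ
  simp only [mul_div_right_comm _ (2 * a), logisticSqDeriv_div_logisticSq]
  have : sigmoid (2 * a * x) ≤ sigmoid (2 * a * y) := sigmoid_le (by gcongr)
  nlinarith

end RhoStar

lemma ρ_pos (t : ℝ) : 0 < ρ t := ρstar_pos t t

lemma integral_id_add_mul_logisticSqDeriv_eq_zero (t : ℝ) :
    ∫ z, (z + t) * logisticSqDeriv (2 * t * (z + t)) * gaussPdf z = 0 := by
  set f := fun y => y * logisticSqDeriv (2 * t * y) * gaussPdf (y - t)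
  have hodd (y : ℝ) : f (-y) = -f y := by
    simp only [f, mul_neg, logisticSqDeriv_neg, gaussPdf_neg_sub, exp_neg]
    field_simp
  have hsym := integral_neg_eq_self f volume
  simp only [hodd, integral_neg] at hsym
  calc ∫ z, (z + t) * logisticSqDeriv (2 * t * (z + t)) * gaussPdf z = ∫ y, f y := by
        rw [← integral_add_right_eq_self f t]
        simp only [f, add_sub_cancel_right]
    _ = 0 := by linarith

lemma abs_two_mul_add_four_mul_le {z x t : ℝ} (hx : x ∈ Metric.ball t 1) :
    |2 * z + 4 * x| ≤ 2 * |z| + 4 * (|t| + 1) := by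
  have : |x| ≤ |t| + 1 := by
    have := abs_sub_abs_le_abs_sub x t
    rw [Metric.mem_ball, Real.dist_eq] at hx
    linarith
  calc |2 * z + 4 * x| ≤ |2 * z| + |4 * x| := abs_add_le _ _
    _ ≤ 2 * |z| + 4 * (|t| + 1) := by rw [abs_mul, abs_mul]; norm_num; linarith

lemma hasDerivAt_ρ_eq_integral (t : ℝ) : HasDerivAt ρ
    (∫ z, logisticSqDeriv (2 * t * (z + t)) * (2 * z + 4 * t) * gaussPdf z) t := by
  have hρ : ρ = fun x => ∫ z, logisticSq (2 * x * (z + x)) * gaussPdf z :=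
    funext fun x => congrFun (ρstar_eq_gaussSmooth x) x
  have hF' (z x : ℝ) : HasDerivAt (fun x => logisticSq (2 * x * (z + x)) * gaussPdf z)
      (logisticSqDeriv (2 * x * (z + x)) * (2 * z + 4 * x) * gaussPdf z) x := by
    have hin : HasDerivAt (fun x => 2 * x * (z + x)) (2 * z + 4 * x) x :=
      (((hasDerivAt_id x).const_mul 2).mul ((hasDerivAt_id x).const_add z)).congr_deriv
        (by simp; ring)
    exact ((hasDerivAt_logisticSq _).comp x hin).mul_const _
  rw [hρ]
  refine (hasDerivAt_integral_of_dominated_loc_of_deriv_le (x₀ := t)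
    (F' := fun x z => logisticSqDeriv (2 * x * (z + x)) * (2 * z + 4 * x) * gaussPdf z)
    (bound := fun z => (4 * |z| + 8 * (|t| + 1)) * gaussPdf z) (Metric.ball_mem_nhds t one_pos)
    (Eventually.of_forall fun x => (by fun_prop : Continuous fun z =>
      logisticSq (2 * x * (z + x)) * gaussPdf z).aestronglyMeasurable)
    (integrable_comp_add_mul_gaussPdf (h := fun y => logisticSq (2 * t * y)) (by fun_prop)
      (fun _ => abs_logisticSq_le _) t)
    (by fun_prop : Continuous fun z =>
      logisticSqDeriv (2 * t * (z + t)) * (2 * z + 4 * t) * gaussPdf z).aestronglyMeasurable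
    (Eventually.of_forall fun z x hx => ?_) ?_ (Eventually.of_forall fun z x _ => hF' z x)).2
  · rw [norm_mul, norm_mul, Real.norm_of_nonneg (gaussPdf_pos z).le, Real.norm_eq_abs,
      Real.norm_eq_abs]
    refine mul_le_mul_of_nonneg_right ?_ (gaussPdf_pos z).le
    calc |logisticSqDeriv (2 * x * (z + x))| * |2 * z + 4 * x| ≤ 2 * (2 * |z| + 4 * (|t| + 1)) :=
          mul_le_mul (abs_logisticSqDeriv_le _) (abs_two_mul_add_four_mul_le hx) (abs_nonneg _)
            zero_le_two
      _ = 4 * |z| + 8 * (|t| + 1) := by ring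
  · refine ((integrable_id_mul_gaussPdf.norm.const_mul 4).add
      (integrable_gaussPdf.const_mul (8 * (|t| + 1)))).congr (Eventually.of_forall fun z => ?_)
    simp only [Pi.add_apply, norm_mul, Real.norm_eq_abs, abs_of_pos (gaussPdf_pos z)]
    ring

/-- The `a`-dependence of `ρstar a θ` does not contribute at `a = θ`: that part of the
derivative is the integral of an odd function. -/
theorem hasDerivAt_ρ (t : ℝ) : HasDerivAt ρ (ρstarDeriv t t) t := by
  have hm : Measurable fun y => logisticSqDeriv (2 * t * y) := by fun_prop
  have i₁ : Integrable fun z => (z + t) * logisticSqDeriv (2 * t * (z + t)) * gaussPdf z :=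
    ((integrable_id_mul_comp_add_mul_gaussPdf hm (fun _ => abs_logisticSqDeriv_le _) t).fun_add
      ((integrable_comp_add_mul_gaussPdf hm (fun _ => abs_logisticSqDeriv_le _) t).const_mul
        t)).congr (Eventually.of_forall fun z => by ring)
  have i₂ := integrable_comp_add_mul_gaussPdf (by fun_prop) (abs_logisticSqDeriv_comp_le t) t
  refine (hasDerivAt_ρ_eq_integral t).congr_deriv ?_
  have hsplit (z : ℝ) : logisticSqDeriv (2 * t * (z + t)) * (2 * z + 4 * t) * gaussPdf z =
      2 * ((z + t) * logisticSqDeriv (2 * t * (z + t)) * gaussPdf z) +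
        logisticSqDeriv (2 * t * (z + t)) * (2 * t) * gaussPdf z := by ring
  simp only [hsplit]
  rw [integral_add (i₁.const_mul 2) i₂, integral_const_mul,
    integral_id_add_mul_logisticSqDeriv_eq_zero, mul_zero, zero_add]
  rfl

lemma HasDerivAt.add_sq_mul {S : ℝ → ℝ} {d t : ℝ} (c : ℝ) (hS : HasDerivAt S d t) :
    HasDerivAt (fun t => (t + c) ^ 2 * S t) ((t + c) * (2 * S t + (t + c) * d)) t :=
  ((((hasDerivAt_id t).add_const c).pow 2).mul hS).congr_deriv (by simp; ring)

lemma IsMaxOn.sub_mul_nonpos_of_segment_subset {f : ℝ → ℝ} {s : Set ℝ} {x y d : ℝ}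
    (hmax : IsMaxOn f s x) (hseg : segment ℝ x y ⊆ s) (hd : HasDerivAt f d x) :
    (y - x) * d ≤ 0 := by
  simpa using hmax.localize.hasFDerivWithinAt_nonpos hd.hasFDerivAt.hasFDerivWithinAt
    (sub_mem_posTangentConeAt_of_segment_subset hseg)

lemma isMaxOn_Ici_of_deriv_sign {F F' : ℝ → ℝ} {a θ₀ : ℝ} (hθ₀ : a ≤ θ₀) (hcont : Continuous F)
    (hF : ∀ x, a < x → HasDerivAt F (F' x) x) (hinc : ∀ x, a < x → x < θ₀ → 0 ≤ F' x)
    (hdec : ∀ x, θ₀ < x → F' x ≤ 0) : IsMaxOn F (Ici a) θ₀ := by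
  rw [isMaxOn_iff]
  intro θ hθ
  rcases le_total θ θ₀ with h | h
  · refine monotoneOn_of_hasDerivWithinAt_nonneg (convex_Icc θ θ₀) hcont.continuousOn
      (fun x hx => (hF x ?_).hasDerivWithinAt) (fun x hx => hinc x ?_ ?_) ⟨le_rfl, h⟩
      ⟨h, le_rfl⟩ h <;>
      rw [interior_Icc] at hx <;> linarith [mem_Ici.1 hθ, hx.1, hx.2]
  · refine antitoneOn_of_hasDerivWithinAt_nonpos (convex_Icc θ₀ θ) hcont.continuousOn
      (fun x hx => (hF x ?_).hasDerivWithinAt) (fun x hx => hdec x ?_) ⟨le_rfl, h⟩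
      ⟨h, le_rfl⟩ h <;>
      rw [interior_Icc] at hx <;> linarith [hx.1]

/-- The derivative of `(θ + c) ^ 2 * S θ` is `(θ + c) ^ 2 * S θ * L θ` with
`L θ = 2 / (θ + c) + S' θ / S θ`, and `L` is strictly decreasing on `(-c, ∞)`. -/
theorem isMaxOn_add_sq_mul_of_logConcave {S S' S'' : ℝ → ℝ} {c θ₀ : ℝ}
    (hS : ∀ θ, HasDerivAt S (S' θ) θ) (hS' : ∀ θ, HasDerivAt S' (S'' θ) θ)
    (hpos : ∀ θ, 0 < S θ) (hlc : ∀ θ, S'' θ * S θ ≤ S' θ ^ 2)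
    (hθ₀ : -c < θ₀) (hcrit : 2 * S θ₀ + (θ₀ + c) * S' θ₀ = 0) :
    IsMaxOn (fun θ => (θ + c) ^ 2 * S θ) (Ici (-c)) θ₀ := by
  set L := fun θ => 2 / (θ + c) + S' θ / S θ
  have hK : Antitone fun θ => S' θ / S θ :=
    antitone_of_hasDerivAt_nonpos (fun θ => (hS' θ).div (hS θ) (hpos θ).ne')
      fun θ => div_nonpos_of_nonpos_of_nonneg (by nlinarith [hlc θ]) (sq_nonneg _)
  have hL : StrictAntiOn L (Ioi (-c)) := fun x hx y hy hxy =>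
    add_lt_add_of_lt_of_le (div_lt_div_of_pos_left two_pos (by linarith [mem_Ioi.1 hx])
      (by linarith)) (hK hxy.le)
  have hLθ₀ : L θ₀ = 0 := by
    have := hpos θ₀
    simp only [L]
    field_simp [(by linarith : θ₀ + c ≠ 0)]
    linarith
  have hF (x : ℝ) (hx : -c < x) :
      HasDerivAt (fun θ => (θ + c) ^ 2 * S θ) ((x + c) ^ 2 * S x * L x) x := by
    have := hpos x
    refine ((hS x).add_sq_mul c).congr_deriv ?_
    simp only [L]
    field_simp [(by linarith : x + c ≠ 0)]
  refine isMaxOn_Ici_of_deriv_sign hθ₀.le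
    (continuous_iff_continuousAt.2 fun x => ((hS x).add_sq_mul c).continuousAt) hF
    (fun x hx hxθ₀ => ?_) (fun x hx => ?_)
  · have := hL (mem_Ioi.2 hx) (mem_Ioi.2 hθ₀) hxθ₀
    rw [hLθ₀] at this
    exact mul_nonneg (mul_nonneg (sq_nonneg _) (hpos x).le) this.le
  · have := hL (mem_Ioi.2 hθ₀) (mem_Ioi.2 (by linarith)) hx
    rw [hLθ₀] at this
    exact mul_nonpos_of_nonneg_of_nonpos (mul_nonneg (sq_nonneg _) (hpos x).le) this.le

lemma two_mul_ρ_add_mul_ρstarDeriv_eq_zero_of_isMaxOn_Ici {τ : ℝ} (hτ : 0 < τ)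
    (hmax : IsMaxOn (fun t => t ^ 2 * ρ t) (Ici 0) τ) :
    2 * ρ τ + τ * ρstarDeriv τ τ = 0 := by
  have hloc : IsLocalMax (fun t => (t + 0) ^ 2 * ρ t) τ :=
    mem_of_superset (Ioi_mem_nhds hτ) fun t ht => by
      simpa using isMaxOn_iff.1 hmax t (mem_Ici.2 (le_of_lt ht))
  simpa [hτ.ne'] using hloc.hasDerivAt_eq_zero ((hasDerivAt_ρ τ).add_sq_mul 0)

lemma two_mul_ρ_add_mul_ρstarDeriv_eq_zero_of_isMaxOn_Icc {c τ a : ℝ} (hc : 0 < c) (hτ : 0 < τ)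
    (hτcrit : 2 * ρ τ + τ * ρstarDeriv τ τ = 0) (ha : a ∈ Icc 0 τ)
    (hmax : IsMaxOn (fun t => (t + c) ^ 2 * ρ t) (Icc 0 τ) a) :
    2 * ρ a + (a + c) * ρstarDeriv a a = 0 := by
  have hG := (hasDerivAt_ρ a).add_sq_mul c
  have h₀ := hmax.sub_mul_nonpos_of_segment_subset
    ((convex_Icc 0 τ).segment_subset ha ⟨le_rfl, hτ.le⟩) hG
  have h₁ := hmax.sub_mul_nonpos_of_segment_subset
    ((convex_Icc 0 τ).segment_subset ha ⟨hτ.le, le_rfl⟩) hG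
  have hac : 0 < a + c := by linarith [ha.1]
  rcases lt_trichotomy (2 * ρ a + (a + c) * ρstarDeriv a a) 0 with hneg | hzero | hpos
  · have : a = 0 := le_antisymm (by nlinarith [mul_neg_of_pos_of_neg hac hneg]) ha.1
    subst this
    simp only [ρstarDeriv_zero, mul_zero, add_zero] at hneg
    linarith [ρ_pos 0]
  · exact hzero
  · have : a = τ := le_antisymm ha.2 (by nlinarith [mul_pos hac hpos])
    subst this
    have : ρstarDeriv a a < 0 := by nlinarith [ρ_pos a]
    nlinarith

/-- a* is a global maximizer of θ ↦ (θ + k/σ)²ρ*(θ) on [−k/σ, ∞), with maximal value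
(a* + k/σ)²ρ(a*), and ρ*(a*) = ρ(a*). -/
theorem stmt_13 (σ k τstar astar : ℝ) (hσ : 0 < σ) (hk : 0 < k)
    (hτ0 : 0 ≤ τstar)
    (hτmax : ∀ τ : ℝ, 0 ≤ τ → τ ^ 2 * ρ τ ≤ τstar ^ 2 * ρ τstar)
    (ha : astar ∈ Set.Icc 0 τstar)
    (hamax : ∀ a ∈ Set.Icc 0 τstar,
      (a + k / σ) ^ 2 * ρ a ≤ (astar + k / σ) ^ 2 * ρ astar) :
    (∀ a : ℝ, -(k / σ) ≤ a →
      (a + k / σ) ^ 2 * ρstar astar a ≤ (astar + k / σ) ^ 2 * ρ astar) ∧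
    ρstar astar astar = ρ astar := by
  have hc : 0 < k / σ := div_pos hk hσ
  have hτ : 0 < τstar := by
    refine hτ0.lt_of_ne fun h => ?_
    have := hτmax 1 zero_le_one
    rw [← h] at this
    linarith [ρ_pos 1]
  have hτcrit := two_mul_ρ_add_mul_ρstarDeriv_eq_zero_of_isMaxOn_Ici hτ (isMaxOn_iff.2 hτmax)
  have hcrit := two_mul_ρ_add_mul_ρstarDeriv_eq_zero_of_isMaxOn_Icc hc hτ hτcrit ha
    (isMaxOn_iff.2 hamax)
  refine ⟨fun θ hθ => isMaxOn_iff.1 (isMaxOn_add_sq_mul_of_logConcave (hasDerivAt_ρstar astar)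
    (hasDerivAt_ρstarDeriv astar) (ρstar_pos astar) (ρstarDeriv2_mul_le_sq astar ha.1)
    (by linarith [ha.1]) hcrit) θ hθ, rfl⟩
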